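/- Let w : [0, ∞) → ℝ be Borel measurable with −1/c ≤ w(x) ≤ 0 for all x ≥ 0, and Lipschitz with constant L ≥ 0, i.e. |w(x) − w(y)| ≤ L|x − y| for all x, y ≥ 0. Then J₀w is Lipschitz with constant T + L, where T = (1/λ)(1 + λ/c) + 1/c; that is, |J₀w(φ₁) − J₀w(φ₂)| ≤ (T + L)|φ₁ − φ₂| for all φ₁, φ₂ ≥ 0. -/

import Mathlib

open MeasureTheory Real

/-- Standard Gaussian density on ℝ. -/
noncomputable def gaussDensity (z : ℝ) : ℝ := Real.exp (-z ^ 2 / 2) / Real.sqrt (2 * Real.pi)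

/-- One-step update of the conditional odds process upon observing a normalized
increment `z` after a waiting time `t`, starting from odds `φ`. -/
noncomputable def jfun (lam alp t φ z : ℝ) : ℝ :=
  Real.exp (alp * z * Real.sqrt t + (lam - alp ^ 2 / 2) * t) * φ +
    ∫ u in (0:ℝ)..t, lam * Real.exp ((lam + alp * z / Real.sqrt t) * u - alp ^ 2 * u ^ 2 / (2 * t))


/-- Deterministic evolution of the odds process between observations. -/
noncomputable def varphi (lam t x : ℝ) : ℝ := Real.exp (lam * t) * (x + 1) - 1

/-- The averaging operator `K`: Gaussian expectation of `w` applied to the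
one-step odds update. -/
noncomputable def Kop (lam alp : ℝ) (w : ℝ → ℝ) (t φ : ℝ) : ℝ :=
  ∫ z : ℝ, w (jfun lam alp t φ z) * gaussDensity z

/-- The jump operator `J`: running cost until the next observation at time `t`,
plus the discounted continuation value after that observation. -/
noncomputable def Jop (lam alp c : ℝ) (w : ℝ → ℝ) (t φ : ℝ) : ℝ :=
  (∫ u in (0:ℝ)..t, Real.exp (-(lam * u)) * (varphi lam u φ - lam / c)) +
    (if 0 < t then Real.exp (-(lam * t)) * Kop lam alp w t φ else 0)

/-- The optimized jump operator `J₀ w(φ) = inf_{t ≥ 0} J w(t, φ)`. -/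
noncomputable def J0op (lam alp c : ℝ) (w : ℝ → ℝ) (φ : ℝ) : ℝ :=
  ⨅ t : Set.Ici (0:ℝ), Jop lam alp c w t φ

/-!
For a fixed observation time `t`, the running cost of `J w(t, ·)` is affine in `φ` with slope `t`,
since `e^{-λu} (varphi u φ + 1) = φ + 1`, and the continuation term `e^{-λt} K w(t, ·)` is
`L`-Lipschitz: `j(t, ·, z)` is affine with slope `exp (α √t z + (λ - α²/2) t)`, whose Gaussian mean
is exactly `e^{λt}`. So `J w(t, ·)` is `(t + L)`-Lipschitz. Moreover `J w(t, φ) ≥ t - T` while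
`J w(0, φ) = 0`, so observation times `t > T` never compete for the infimum, and on `[0, T]` all the
`J w(t, ·)` are `(T + L)`-Lipschitz.
-/

open ProbabilityTheory

lemma gaussDensity_eq_gaussianPDFReal : gaussDensity = gaussianPDFReal 0 1 := by
  ext z
  simp [gaussDensity, gaussianPDFReal]
  ring

lemma integral_mul_gaussDensity (f : ℝ → ℝ) :
    ∫ z, f z * gaussDensity z = ∫ z, f z ∂gaussianReal 0 1 := by
  simp_rw [integral_gaussianReal_eq_integral_smul one_ne_zero, gaussDensity_eq_gaussianPDFReal,
    smul_eq_mul, mul_comm]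

lemma integral_exp_mul_gaussianReal (μ : ℝ) (v : NNReal) (a : ℝ) :
    ∫ z, exp (a * z) ∂gaussianReal μ v = exp (μ * a + v * a ^ 2 / 2) :=
  congrFun mgf_id_gaussianReal a

section OddsUpdate

variable {lam alp t φ : ℝ}

lemma continuous_jfun (lam alp t φ : ℝ) : Continuous (jfun lam alp t φ) := by
  have hintegrand : Continuous (Function.uncurry fun z u : ℝ ↦
      lam * exp ((lam + alp * z / √t) * u - alp ^ 2 * u ^ 2 / (2 * t))) := by
    fun_prop
  unfold jfun
  exact (by fun_prop : Continuous _).add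
    (intervalIntegral.continuous_parametric_intervalIntegral_of_continuous' hintegrand 0 t)

lemma jfun_nonneg (hlam : 0 ≤ lam) (ht : 0 ≤ t) (hφ : 0 ≤ φ) (z : ℝ) :
    0 ≤ jfun lam alp t φ z :=
  add_nonneg (by positivity)
    (intervalIntegral.integral_nonneg ht fun _ _ ↦ by positivity)

lemma jfun_sub_jfun (lam alp t φ₁ φ₂ z : ℝ) :
    jfun lam alp t φ₁ z - jfun lam alp t φ₂ z =
      exp ((lam - alp ^ 2 / 2) * t) * exp (alp * √t * z) * (φ₁ - φ₂) := by
  simp only [jfun, add_sub_add_right_eq_sub, ← mul_sub, ← exp_add]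
  congr 2
  ring

end OddsUpdate

section Averaging

variable {lam alp t φ φ₁ φ₂ M L : ℝ} {w : ℝ → ℝ}

lemma Kop_eq_integral_gaussianReal :
    Kop lam alp w t φ = ∫ z, w (jfun lam alp t φ z) ∂gaussianReal 0 1 :=
  integral_mul_gaussDensity _

lemma integrable_comp_jfun (hlam : 0 ≤ lam) (ht : 0 ≤ t) (hφ : 0 ≤ φ) (hw : Measurable w)
    (hM : ∀ x, 0 ≤ x → |w x| ≤ M) :
    Integrable (fun z ↦ w (jfun lam alp t φ z)) (gaussianReal 0 1) :=
  .of_bound (hw.comp (continuous_jfun lam alp t φ).measurable).aestronglyMeasurable M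
    (ae_of_all _ fun z ↦ hM _ (jfun_nonneg hlam ht hφ z))

lemma le_Kop (hlam : 0 ≤ lam) (ht : 0 ≤ t) (hφ : 0 ≤ φ) (hw : Measurable w)
    (hM : ∀ x, 0 ≤ x → |w x| ≤ M) {a : ℝ} (ha : ∀ x, 0 ≤ x → a ≤ w x) :
    a ≤ Kop lam alp w t φ := by
  rw [Kop_eq_integral_gaussianReal]
  calc a = ∫ _, a ∂gaussianReal 0 1 := by simp
    _ ≤ _ := integral_mono (integrable_const a) (integrable_comp_jfun hlam ht hφ hw hM)
      fun z ↦ ha _ (jfun_nonneg hlam ht hφ z)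

lemma abs_Kop_sub_Kop_le (hlam : 0 ≤ lam) (ht : 0 ≤ t) (hφ₁ : 0 ≤ φ₁) (hφ₂ : 0 ≤ φ₂)
    (hw : Measurable w) (hM : ∀ x, 0 ≤ x → |w x| ≤ M)
    (hLip : ∀ x y, 0 ≤ x → 0 ≤ y → |w x - w y| ≤ L * |x - y|) :
    |Kop lam alp w t φ₁ - Kop lam alp w t φ₂| ≤ L * exp (lam * t) * |φ₁ - φ₂| := by
  set C := L * |φ₁ - φ₂| * exp ((lam - alp ^ 2 / 2) * t)
  have hpointwise (z : ℝ) :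
      ‖w (jfun lam alp t φ₁ z) - w (jfun lam alp t φ₂ z)‖ ≤ C * exp (alp * √t * z) := by
    refine (hLip _ _ (jfun_nonneg hlam ht hφ₁ z) (jfun_nonneg hlam ht hφ₂ z)).trans_eq ?_
    rw [jfun_sub_jfun, abs_mul, abs_mul, abs_exp, abs_exp]
    ring
  rw [Kop_eq_integral_gaussianReal, Kop_eq_integral_gaussianReal,
    ← integral_sub (integrable_comp_jfun hlam ht hφ₁ hw hM)
      (integrable_comp_jfun hlam ht hφ₂ hw hM)]
  calc _ ≤ ∫ z, C * exp (alp * √t * z) ∂gaussianReal 0 1 :=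
        norm_integral_le_of_norm_le ((integrable_exp_mul_gaussianReal _).const_mul C)
          (ae_of_all _ hpointwise)
    _ = C * exp (alp ^ 2 * t / 2) := by
        rw [integral_const_mul, integral_exp_mul_gaussianReal, mul_pow, sq_sqrt ht]
        simp
    _ = L * exp (lam * t) * |φ₁ - φ₂| := by
        rw [mul_assoc, ← exp_add]
        ring_nf

end Averaging

section Observation

variable {lam alp c t φ φ₁ φ₂ M L : ℝ} {w : ℝ → ℝ}

lemma integral_exp_neg_mul (hlam : lam ≠ 0) (t : ℝ) :
    ∫ u in (0 : ℝ)..t, exp (-(lam * u)) = (1 - exp (-(lam * t))) / lam := by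
  rw [intervalIntegral.integral_comp_mul_left (fun x ↦ exp (-x)) hlam]
  simp [div_eq_inv_mul]

lemma exp_neg_mul_mul_varphi_sub (lam c u φ : ℝ) :
    exp (-(lam * u)) * (varphi lam u φ - lam / c) = φ + 1 - (1 + lam / c) * exp (-(lam * u)) := by
  have : exp (-(lam * u)) * exp (lam * u) = 1 := by rw [← exp_add, neg_add_cancel, exp_zero]
  unfold varphi
  linear_combination (φ + 1) * this

lemma integral_runningCost (hlam : lam ≠ 0) (t φ : ℝ) :
    ∫ u in (0 : ℝ)..t, exp (-(lam * u)) * (varphi lam u φ - lam / c) =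
      t * (φ + 1) - (1 + lam / c) * ((1 - exp (-(lam * t))) / lam) := by
  simp_rw [exp_neg_mul_mul_varphi_sub]
  have hexp : Continuous fun u : ℝ ↦ (1 + lam / c) * exp (-(lam * u)) := by fun_prop
  rw [intervalIntegral.integral_sub intervalIntegrable_const (hexp.intervalIntegrable _ _),
    intervalIntegral.integral_const, intervalIntegral.integral_const_mul,
    integral_exp_neg_mul hlam, smul_eq_mul, sub_zero]

lemma Jop_zero (φ : ℝ) : Jop lam alp c w 0 φ = 0 := by
  simp [Jop]

lemma Jop_of_pos (hlam : lam ≠ 0) (ht : 0 < t) (φ : ℝ) :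
    Jop lam alp c w t φ = t * (φ + 1) - (1 + lam / c) * ((1 - exp (-(lam * t))) / lam) +
      exp (-(lam * t)) * Kop lam alp w t φ := by
  rw [Jop, if_pos ht, integral_runningCost hlam]

lemma sub_le_Jop (hlam : 0 < lam) (hc : 0 < c) (hw : Measurable w)
    (hM : ∀ x, 0 ≤ x → |w x| ≤ M) (hwl : ∀ x, 0 ≤ x → -1 / c ≤ w x)
    (ht : 0 ≤ t) (hφ : 0 ≤ φ) :
    t - ((1 / lam) * (1 + lam / c) + 1 / c) ≤ Jop lam alp c w t φ := by
  rcases ht.eq_or_lt with rfl | ht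
  · rw [Jop_zero]
    have : 0 ≤ (1 / lam) * (1 + lam / c) + 1 / c := by positivity
    linarith
  rw [Jop_of_pos hlam.ne' ht]
  have hexp_pos : 0 < exp (-(lam * t)) := exp_pos _
  have hexp_le : exp (-(lam * t)) ≤ 1 := exp_le_one_iff.2 (by nlinarith)
  have hrun : t ≤ t * (φ + 1) := by nlinarith
  have hdisc : (1 + lam / c) * ((1 - exp (-(lam * t))) / lam) ≤ (1 / lam) * (1 + lam / c) := by
    calc _ ≤ (1 + lam / c) * (1 / lam) := by gcongr; linarith
      _ = _ := mul_comm _ _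
  have hcont : -(1 / c) ≤ exp (-(lam * t)) * Kop lam alp w t φ := by
    have hK := le_Kop (alp := alp) hlam.le ht.le hφ hw hM hwl
    rw [neg_div] at hK
    nlinarith [show 0 < 1 / c by positivity]
  linarith

lemma abs_Jop_sub_Jop_le (hlam : 0 < lam) (hw : Measurable w) (hM : ∀ x, 0 ≤ x → |w x| ≤ M)
    (hL : 0 ≤ L) (hLip : ∀ x y, 0 ≤ x → 0 ≤ y → |w x - w y| ≤ L * |x - y|)
    (ht : 0 ≤ t) (hφ₁ : 0 ≤ φ₁) (hφ₂ : 0 ≤ φ₂) :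
    |Jop lam alp c w t φ₁ - Jop lam alp c w t φ₂| ≤ (t + L) * |φ₁ - φ₂| := by
  rcases ht.eq_or_lt with rfl | ht
  · simp only [Jop_zero, sub_zero, abs_zero, zero_add]
    positivity
  have hK := abs_Kop_sub_Kop_le (alp := alp) hlam.le ht.le hφ₁ hφ₂ hw hM hLip
  rw [Jop_of_pos hlam.ne' ht, Jop_of_pos hlam.ne' ht]
  calc _ = |t * (φ₁ - φ₂) + exp (-(lam * t)) * (Kop lam alp w t φ₁ - Kop lam alp w t φ₂)| := by
        ring_nf
    _ ≤ t * |φ₁ - φ₂| + exp (-(lam * t)) * (L * exp (lam * t) * |φ₁ - φ₂|) := by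
        refine (abs_add_le _ _).trans ?_
        rw [abs_mul, abs_mul, abs_of_pos ht, abs_exp]
        gcongr
    _ = (t + L) * |φ₁ - φ₂| := by
        rw [← mul_assoc, mul_left_comm, ← exp_add, neg_add_cancel, exp_zero]
        ring

end Observation

section Optimization

variable {lam alp c φ ψ M L : ℝ} {w : ℝ → ℝ}

lemma bddBelow_range_Jop (hlam : 0 < lam) (hc : 0 < c) (hw : Measurable w)
    (hM : ∀ x, 0 ≤ x → |w x| ≤ M) (hwl : ∀ x, 0 ≤ x → -1 / c ≤ w x) (hφ : 0 ≤ φ) :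
    BddBelow (Set.range fun t : Set.Ici (0 : ℝ) ↦ Jop lam alp c w t φ) := by
  refine ⟨-((1 / lam) * (1 + lam / c) + 1 / c), ?_⟩
  rintro _ ⟨t, rfl⟩
  linarith [sub_le_Jop (alp := alp) hlam hc hw hM hwl t.2 hφ, t.2.out]

lemma J0op_le_Jop_add (hlam : 0 < lam) (hc : 0 < c) (hw : Measurable w)
    (hM : ∀ x, 0 ≤ x → |w x| ≤ M) (hwl : ∀ x, 0 ≤ x → -1 / c ≤ w x)
    (hL : 0 ≤ L) (hLip : ∀ x y, 0 ≤ x → 0 ≤ y → |w x - w y| ≤ L * |x - y|)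
    (hφ : 0 ≤ φ) (hψ : 0 ≤ ψ) (t : Set.Ici (0 : ℝ)) :
    J0op lam alp c w φ ≤
      Jop lam alp c w t ψ + ((1 / lam) * (1 + lam / c) + 1 / c + L) * |φ - ψ| := by
  set T := (1 / lam) * (1 + lam / c) + 1 / c
  have hbdd := bddBelow_range_Jop (alp := alp) hlam hc hw hM hwl hφ
  rcases le_or_gt (t : ℝ) T with htT | htT
  · calc J0op lam alp c w φ ≤ Jop lam alp c w t φ := ciInf_le hbdd t
      _ ≤ Jop lam alp c w t ψ + (t + L) * |φ - ψ| := by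
          have hlip := abs_Jop_sub_Jop_le (alp := alp) (c := c) hlam hw hM hL hLip t.2 hφ hψ
          linarith [abs_sub_le_iff.1 hlip]
      _ ≤ _ := by gcongr
  · have hstop : J0op lam alp c w φ ≤ 0 :=
      (ciInf_le hbdd ⟨0, Set.self_mem_Ici⟩).trans_eq (Jop_zero φ)
    have hT : 0 ≤ T := by positivity
    linarith [sub_le_Jop (alp := alp) hlam hc hw hM hwl t.2 hψ,
      mul_nonneg (add_nonneg hT hL) (abs_nonneg (φ - ψ))]

lemma J0op_le_J0op_add (hlam : 0 < lam) (hc : 0 < c) (hw : Measurable w)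
    (hM : ∀ x, 0 ≤ x → |w x| ≤ M) (hwl : ∀ x, 0 ≤ x → -1 / c ≤ w x)
    (hL : 0 ≤ L) (hLip : ∀ x y, 0 ≤ x → 0 ≤ y → |w x - w y| ≤ L * |x - y|)
    (hφ : 0 ≤ φ) (hψ : 0 ≤ ψ) :
    J0op lam alp c w φ ≤
      J0op lam alp c w ψ + ((1 / lam) * (1 + lam / c) + 1 / c + L) * |φ - ψ| :=
  le_ciInf_add (J0op_le_Jop_add hlam hc hw hM hwl hL hLip hφ hψ)

end Optimization

theorem J0op_lipschitz_general (lam alp c : ℝ) (hlam : 0 < lam) (hc : 0 < c)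
    (w : ℝ → ℝ) (hw : Measurable w)
    (hwl : ∀ x : ℝ, 0 ≤ x → -1 / c ≤ w x) (hwu : ∀ x : ℝ, 0 ≤ x → w x ≤ 0)
    (L : ℝ) (hL : 0 ≤ L)
    (hLip : ∀ x y : ℝ, 0 ≤ x → 0 ≤ y → |w x - w y| ≤ L * |x - y|) :
    ∀ φ₁ φ₂ : ℝ, 0 ≤ φ₁ → 0 ≤ φ₂ →
      |J0op lam alp c w φ₁ - J0op lam alp c w φ₂| ≤
        ((1 / lam) * (1 + lam / c) + 1 / c + L) * |φ₁ - φ₂| := by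
  intro φ₁ φ₂ hφ₁ hφ₂
  have hM : ∀ x, 0 ≤ x → |w x| ≤ 1 / c := fun x hx ↦
    abs_le.2 ⟨by simpa [neg_div] using hwl x hx, (hwu x hx).trans (by positivity)⟩
  have h₁₂ := J0op_le_J0op_add (alp := alp) hlam hc hw hM hwl hL hLip hφ₁ hφ₂
  have h₂₁ := J0op_le_J0op_add (alp := alp) hlam hc hw hM hwl hL hLip hφ₂ hφ₁
  rw [abs_sub_comm φ₂] at h₂₁
  exact abs_sub_le_iff.2 ⟨by linarith, by linarith⟩

/-- If `w` is valued in `[−1/c, 0]` and `L`-Lipschitz on `[0, ∞)`, then `J₀w` is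
`(T + L)`-Lipschitz on `[0, ∞)`, where `T = (1/λ)(1 + λ/c) + 1/c`. -/
theorem J0op_lipschitz (lam alp c : ℝ) (hlam : 0 < lam) (halp : 0 < alp) (hc : 0 < c)
    (w : ℝ → ℝ) (hw : Measurable w)
    (hwl : ∀ x : ℝ, 0 ≤ x → -1 / c ≤ w x) (hwu : ∀ x : ℝ, 0 ≤ x → w x ≤ 0)
    (L : ℝ) (hL : 0 ≤ L)
    (hLip : ∀ x y : ℝ, 0 ≤ x → 0 ≤ y → |w x - w y| ≤ L * |x - y|) :
    ∀ φ₁ φ₂ : ℝ, 0 ≤ φ₁ → 0 ≤ φ₂ →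
      |J0op lam alp c w φ₁ - J0op lam alp c w φ₂| ≤
        ((1 / lam) * (1 + lam / c) + 1 / c + L) * |φ₁ - φ₂| :=
  J0op_lipschitz_general lam alp c hlam hc w hw hwl hwu L hL hLip
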